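/- Assume every bidder's valuation is monotone gross substitute. If S ⊆ Ω is a minimal minimizer for a price vector p ∈ ℕ^m, then S is in excess demand at p, i.e. S ∈ ED(p). -/
import Mathlib


/-- Utility of a bundle `S` at prices `p`: `v(S) - p(S)` (an integer). -/
def util {m : ℕ} (v : Finset (Fin m) → ℕ) (p : Fin m → ℕ) (S : Finset (Fin m)) : ℤ :=
  (v S : ℤ) - ∑ j ∈ S, (p j : ℤ)

/-- Demand collection: bundles of maximum utility at prices `p`. -/
def demand {m : ℕ} (v : Finset (Fin m) → ℕ) (p : Fin m → ℕ) : Finset (Finset (Fin m)) :=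
  Finset.univ.filter fun D => ∀ T : Finset (Fin m), util v p T ≤ util v p D

lemma demand_nonempty {m : ℕ} (v : Finset (Fin m) → ℕ) (p : Fin m → ℕ) :
    (demand v p).Nonempty := by
  obtain ⟨D, hD, hmax⟩ := Finset.exists_max_image (Finset.univ : Finset (Finset (Fin m)))
    (util v p) ⟨∅, Finset.mem_univ ∅⟩
  exact ⟨D, Finset.mem_filter.2 ⟨Finset.mem_univ D, fun T => hmax T (Finset.mem_univ T)⟩⟩

/-- Maximum utility of a bidder at prices `p`. -/
def uMax {m : ℕ} (v : Finset (Fin m) → ℕ) (p : Fin m → ℕ) : ℤ :=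
  Finset.univ.sup' Finset.univ_nonempty (util v p)

/-- A valuation is monotone with respect to inclusion. -/
def MonotoneVal {m : ℕ} (v : Finset (Fin m) → ℕ) : Prop :=
  ∀ ⦃S T : Finset (Fin m)⦄, S ⊆ T → v S ≤ v T

/-- Gross substitute: if `S` is demanded at `p` and `q ≥ p`, some demanded set at `q`
contains every item of `S` whose price did not change. -/
def GrossSub {m : ℕ} (v : Finset (Fin m) → ℕ) : Prop :=
  ∀ p q : Fin m → ℕ, p ≤ q → ∀ S ∈ demand v p,
    ∃ S' ∈ demand v q, ∀ j ∈ S, p j = q j → j ∈ S'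

/-- Requirement `l_p(S)` of a single bidder. -/
def req {m : ℕ} (v : Finset (Fin m) → ℕ) (p : Fin m → ℕ) (S : Finset (Fin m)) : ℕ :=
  (demand v p).inf' (demand_nonempty v p) fun D => (S ∩ D).card

/-- Redundant `h_p(S)` of a single bidder. -/
def red {m : ℕ} (v : Finset (Fin m) → ℕ) (p : Fin m → ℕ) (S : Finset (Fin m)) : ℕ :=
  (demand v p).sup' (demand_nonempty v p) fun D => (S ∩ D).card

/-- Auction requirement `l^p(S)`. -/
def reqAll {m n : ℕ} (v : Fin n → Finset (Fin m) → ℕ) (p : Fin m → ℕ) (S : Finset (Fin m)) : ℕ :=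
  ∑ i, req (v i) p S

/-- Auction redundant `h^p(S)`. -/
def redAll {m n : ℕ} (v : Fin n → Finset (Fin m) → ℕ) (p : Fin m → ℕ) (S : Finset (Fin m)) : ℕ :=
  ∑ i, red (v i) p S

/-- Lyapunov function `L(p) = Σ_i u_i(p) + Σ_j p_j`. -/
def lyap {m n : ℕ} (v : Fin n → Finset (Fin m) → ℕ) (p : Fin m → ℕ) : ℤ :=
  ∑ i, uMax (v i) p + ∑ j, (p j : ℤ)

/-- `p` is Walrasian: there is a partition of the items into demanded sets. -/
def IsWalrasian {m n : ℕ} (v : Fin n → Finset (Fin m) → ℕ) (p : Fin m → ℕ) : Prop :=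
  ∃ A : Fin n → Finset (Fin m),
    (∀ i j, i ≠ j → Disjoint (A i) (A j)) ∧
    Finset.univ.biUnion A = Finset.univ ∧
    ∀ i, A i ∈ demand (v i) p

/-- `p + 1_S`. -/
def incr {m : ℕ} (p : Fin m → ℕ) (S : Finset (Fin m)) : Fin m → ℕ :=
  fun j => if j ∈ S then p j + 1 else p j

/-- `p - 1_S`. -/
def decr {m : ℕ} (p : Fin m → ℕ) (S : Finset (Fin m)) : Fin m → ℕ :=
  fun j => if j ∈ S then p j - 1 else p j

/-- `S` is over-demanded at `p`: `l^p(S) > |S|`. -/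
def OverDemanded {m n : ℕ} (v : Fin n → Finset (Fin m) → ℕ) (p : Fin m → ℕ)
    (S : Finset (Fin m)) : Prop :=
  S.card < reqAll v p S

/-- `S` is weakly over-demanded at `p`: `l^p(S) ≥ |S|`. -/
def WeaklyOverDemanded {m n : ℕ} (v : Fin n → Finset (Fin m) → ℕ) (p : Fin m → ℕ)
    (S : Finset (Fin m)) : Prop :=
  S.card ≤ reqAll v p S

/-- `S` is under-demanded at `p`: `h^p(S) < |S|`. -/
def UnderDemanded {m n : ℕ} (v : Fin n → Finset (Fin m) → ℕ) (p : Fin m → ℕ)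
    (S : Finset (Fin m)) : Prop :=
  redAll v p S < S.card

/-- `S` is weakly under-demanded at `p`: `h^p(S) ≤ |S|`. -/
def WeaklyUnderDemanded {m n : ℕ} (v : Fin n → Finset (Fin m) → ℕ) (p : Fin m → ℕ)
    (S : Finset (Fin m)) : Prop :=
  redAll v p S ≤ S.card

/-- `S ∈ ED(p)`: `S` is over-demanded at `p` and no nonempty `T ⊆ S` is weakly
under-demanded at `p + 1_S`. -/
def ExcessDemand {m n : ℕ} (v : Fin n → Finset (Fin m) → ℕ) (p : Fin m → ℕ)
    (S : Finset (Fin m)) : Prop :=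
  OverDemanded v p S ∧
    ∀ T ⊆ S, T ≠ ∅ → ¬ WeaklyUnderDemanded v (incr p S) T

/-- `S ∈ DD(p)`: `S` is under-demanded at `p` and no nonempty `T ⊆ S` is weakly
over-demanded at `p - 1_S`. -/
def DearthDemand {m n : ℕ} (v : Fin n → Finset (Fin m) → ℕ) (p : Fin m → ℕ)
    (S : Finset (Fin m)) : Prop :=
  UnderDemanded v p S ∧
    ∀ T ⊆ S, T ≠ ∅ → ¬ WeaklyOverDemanded v (decr p S) T

/-- `S` is a minimal minimizer for `p`. -/
def MinimalMinimizer {m n : ℕ} (v : Fin n → Finset (Fin m) → ℕ) (p : Fin m → ℕ)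
    (S : Finset (Fin m)) : Prop :=
  lyap v (incr p S) < lyap v p ∧
    (∀ T : Finset (Fin m), lyap v (incr p S) ≤ lyap v (incr p T)) ∧
    ∀ T : Finset (Fin m), T ⊂ S → lyap v (incr p S) < lyap v (incr p T)

/-- `S` is a maximal minimizer for `p`. -/
def MaximalMinimizer {m n : ℕ} (v : Fin n → Finset (Fin m) → ℕ) (p : Fin m → ℕ)
    (S : Finset (Fin m)) : Prop :=
  lyap v (decr p S) < lyap v p ∧
    (∀ T : Finset (Fin m), lyap v (decr p S) ≤ lyap v (decr p T)) ∧
    ∀ T : Finset (Fin m), T ⊂ S → lyap v (decr p S) < lyap v (decr p T)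


lemma util_le_uMax {m : ℕ} (v : Finset (Fin m) → ℕ) (p : Fin m → ℕ) (X : Finset (Fin m)) :
    util v p X ≤ uMax v p :=
  Finset.le_sup' _ (Finset.mem_univ X)

lemma mem_demand_iff {m : ℕ} {v : Finset (Fin m) → ℕ} {p : Fin m → ℕ} {D : Finset (Fin m)} :
    D ∈ demand v p ↔ ∀ T, util v p T ≤ util v p D := by
  simp [demand]

lemma uMax_eq_util {m : ℕ} {v : Finset (Fin m) → ℕ} {p : Fin m → ℕ} {D : Finset (Fin m)}
    (hD : D ∈ demand v p) : uMax v p = util v p D :=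
  le_antisymm (Finset.sup'_le _ _ fun X _ => mem_demand_iff.1 hD X) (util_le_uMax v p D)

lemma sum_incr {m : ℕ} (p : Fin m → ℕ) (T X : Finset (Fin m)) :
    ∑ j ∈ X, ((incr p T j : ℤ)) = ∑ j ∈ X, (p j : ℤ) + ((X ∩ T).card : ℤ) := by
  have h1 : ∀ j ∈ X, ((incr p T j : ℤ)) = (p j : ℤ) + if j ∈ T then 1 else 0 := by
    intro j _; by_cases h : j ∈ T <;> simp [incr, h]
  rw [Finset.sum_congr rfl h1, Finset.sum_add_distrib]
  congr 1
  rw [Finset.sum_ite_mem]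
  simp

lemma util_incr {m : ℕ} (v : Finset (Fin m) → ℕ) (p : Fin m → ℕ) (T X : Finset (Fin m)) :
    util v (incr p T) X = util v p X - ((X ∩ T).card : ℤ) := by
  unfold util; rw [sum_incr]; ring

lemma le_incr {m : ℕ} (p : Fin m → ℕ) (T : Finset (Fin m)) : p ≤ incr p T := by
  intro j; by_cases h : j ∈ T <;> simp [incr, h]

lemma incr_empty {m : ℕ} (p : Fin m → ℕ) : incr p ∅ = p := by
  funext j; simp [incr]

lemma incr_insert {m : ℕ} (r : Fin m → ℕ) {T : Finset (Fin m)} {j : Fin m} (h : j ∉ T) :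
    incr r (insert j T) = incr (incr r T) {j} := by
  funext x
  by_cases hx : x = j
  · subst hx; simp [incr, h]
  · by_cases hxT : x ∈ T <;> simp [incr, hx, hxT]

lemma key_lemma {m : ℕ} (v : Finset (Fin m) → ℕ) (hgs : GrossSub v) (r : Fin m → ℕ)
    (T : Finset (Fin m)) :
    ∃ D ∈ demand v (incr r T), uMax v r ≤ uMax v (incr r T) + ((T ∩ D).card : ℤ) := by
  induction T using Finset.induction_on with
  | empty =>
      obtain ⟨D, hD⟩ := demand_nonempty v r
      refine ⟨D, by rwa [incr_empty], ?_⟩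
      rw [incr_empty]
      have : (0:ℤ) ≤ ((∅ ∩ D : Finset (Fin m)).card : ℤ) := Int.natCast_nonneg _
      linarith
  | @insert j T hj ih =>
      obtain ⟨D, hD, hle⟩ := ih
      set s := incr r T with hs
      set s1 := incr s {j} with hs1def
      have hs1 : incr r (insert j T) = s1 := incr_insert r hj
      rw [hs1]
      by_cases hdrop : uMax v s1 < uMax v s
      · have hjD : j ∈ D := by
          by_contra hjD
          have hDj : D ∩ ({j} : Finset (Fin m)) = ∅ := by
            ext x; simp only [Finset.mem_inter, Finset.mem_singleton, Finset.notMem_empty,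
              iff_false]
            rintro ⟨hxD, rfl⟩; exact hjD hxD
          have h1 : util v s1 D = util v s D := by
            rw [hs1def, util_incr, hDj]; simp
          have h2 := util_le_uMax v s1 D
          rw [h1, ← uMax_eq_util hD] at h2
          exact absurd h2 (not_le.2 hdrop)
        have hDj : D ∩ ({j} : Finset (Fin m)) = {j} := by
          ext x; simp only [Finset.mem_inter, Finset.mem_singleton]
          constructor
          · rintro ⟨_, rfl⟩; rfl
          · rintro rfl; exact ⟨hjD, rfl⟩
        have hutil : util v s1 D = uMax v s - 1 := by
          rw [hs1def, util_incr, hDj, ← uMax_eq_util hD]; simp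
        have hub : uMax v s1 ≤ uMax v s - 1 := by
          have := hdrop
          omega
        have hDmem : D ∈ demand v s1 := by
          refine mem_demand_iff.2 fun X => ?_
          have h2 := util_le_uMax v s1 X
          rw [hutil]; exact h2.trans hub
        have hmax1 : uMax v s1 = uMax v s - 1 := by
          rw [uMax_eq_util hDmem, hutil]
        refine ⟨D, hDmem, ?_⟩
        have hins : insert j T ∩ D = insert j (T ∩ D) :=
          Finset.insert_inter_of_mem hjD
        have hjTD : j ∉ T ∩ D := fun h => hj (Finset.mem_inter.1 h).1
        rw [hins, Finset.card_insert_of_notMem hjTD]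
        push_cast
        linarith
      · push_neg at hdrop
        obtain ⟨D', hD', hsub⟩ := hgs s s1 (le_incr s {j}) D hD
        refine ⟨D', hD', ?_⟩
        have hsubset : T ∩ D ⊆ insert j T ∩ D' := by
          intro x hx
          obtain ⟨hxT, hxD⟩ := Finset.mem_inter.1 hx
          have hxj : x ≠ j := fun h => hj (h ▸ hxT)
          have hpx : s x = s1 x := by
            rw [hs1def]; simp [incr, hxj]
          exact Finset.mem_inter.2 ⟨Finset.mem_insert_of_mem hxT, hsub x hxD hpx⟩
        have hc : ((T ∩ D).card : ℤ) ≤ ((insert j T ∩ D').card : ℤ) := by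
          exact_mod_cast Finset.card_le_card hsubset
        linarith

theorem stmt8 {m n : ℕ} (v : Fin n → Finset (Fin m) → ℕ)
    (hzero : ∀ i, v i ∅ = 0) (hmono : ∀ i, MonotoneVal (v i))
    (hgs : ∀ i, GrossSub (v i))
    (p : Fin m → ℕ) (S : Finset (Fin m)) (hmin : MinimalMinimizer v p S) :
    ExcessDemand v p S := by
  obtain ⟨hlt, hmin2, hmin3⟩ := hmin
  constructor
  · -- OverDemanded
    have key1 : ∀ i, uMax (v i) p - (req (v i) p S : ℤ) ≤ uMax (v i) (incr p S) := by
      intro i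
      obtain ⟨D, hD, hDeq⟩ := Finset.exists_mem_eq_inf' (demand_nonempty (v i) p)
        (fun D => (S ∩ D).card)
      have h2 := util_le_uMax (v i) (incr p S) D
      rw [util_incr, ← uMax_eq_util hD] at h2
      have hre : req (v i) p S = (S ∩ D).card := hDeq
      rw [hre, Finset.inter_comm]
      linarith
    have hsum : ∑ i, uMax (v i) p - (reqAll v p S : ℤ) ≤ ∑ i, uMax (v i) (incr p S) := by
      have h := Finset.sum_le_sum (fun i (_ : i ∈ Finset.univ) => key1 i)
      rw [Finset.sum_sub_distrib] at h
      have : ((reqAll v p S : ℤ)) = ∑ i, (req (v i) p S : ℤ) := by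
        unfold reqAll; push_cast; ring
      linarith [h, this.ge, this.le]
    have hps : ∑ j, ((incr p S j : ℤ)) = ∑ j, (p j : ℤ) + (S.card : ℤ) := by
      rw [sum_incr, Finset.univ_inter]
    unfold lyap at hlt
    rw [hps] at hlt
    have : (S.card : ℤ) < (reqAll v p S : ℤ) := by linarith
    exact_mod_cast this
  · intro T hTS hTne hWUD
    unfold WeaklyUnderDemanded at hWUD
    have hq : incr (incr p (S \ T)) T = incr p S := by
      funext x
      by_cases hxT : x ∈ T
      · have hxS : x ∈ S := hTS hxT
        simp [incr, hxT, hxS, Finset.mem_sdiff]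
      · by_cases hxS : x ∈ S <;> simp [incr, hxT, hxS, Finset.mem_sdiff]
    set r := incr p (S \ T) with hr
    have hkey : ∀ i, ∃ D ∈ demand (v i) (incr p S),
        uMax (v i) r ≤ uMax (v i) (incr p S) + ((T ∩ D).card : ℤ) := by
      intro i
      have h := key_lemma (v i) (hgs i) r T
      rwa [hq] at h
    choose D hD hle using hkey
    have hcard : ∀ i, ((T ∩ D i).card : ℤ) ≤ (red (v i) (incr p S) T : ℤ) := by
      intro i
      exact_mod_cast Finset.le_sup' (fun E => (T ∩ E).card) (hD i)
    have hsum : ∑ i, uMax (v i) r ≤ ∑ i, uMax (v i) (incr p S) + (redAll v (incr p S) T : ℤ) := by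
      have h := Finset.sum_le_sum (fun i (_ : i ∈ Finset.univ) =>
        (hle i).trans (by linarith [hcard i] :
          uMax (v i) (incr p S) + ((T ∩ D i).card : ℤ) ≤
          uMax (v i) (incr p S) + (red (v i) (incr p S) T : ℤ)))
      rw [Finset.sum_add_distrib] at h
      have : ((redAll v (incr p S) T : ℤ)) = ∑ i, (red (v i) (incr p S) T : ℤ) := by
        unfold redAll; push_cast; ring
      linarith
    have hps : ∑ j, ((incr p S j : ℤ)) = ∑ j, ((r j : ℤ)) + (T.card : ℤ) := by
      rw [← hq, sum_incr, Finset.univ_inter]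
    have hssub : S \ T ⊂ S := Finset.sdiff_ssubset hTS (Finset.nonempty_iff_ne_empty.2 hTne)
    have hcontra := hmin3 _ hssub
    rw [← hr] at hcontra
    unfold lyap at hcontra
    have hW : (redAll v (incr p S) T : ℤ) ≤ (T.card : ℤ) := by exact_mod_cast hWUD
    linarith
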